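/- arXiv:1508.05500 — 2 statements merged into one kernel-verified Lean document; each statement's English description precedes it below -/
import Mathlib

section
/- Let φ₁(s) = s, φ₂(s) = (1/2)(s² − 1/12), φ₃(s) = s³/6, φ₄(s) = (1/24)(s⁴ − 1/80). Given real numbers W₊, W₋, W̄₀, W̄₊₁, W̄₋₁, there exist unique real numbers a, d₁, d₂, d₃, d₄ such that p(s) = a + d₁φ₁(s) + d₂φ₂(s) + d₃φ₃(s) + d₄φ₄(s) satisfies p(1/2) = W₊, p(−1/2) = W₋, ∫_{−1/2}^{1/2} p = W̄₀, ∫_{1/2}^{3/2} p = W̄₊₁, and ∫_{−3/2}^{−1/2} p = W̄₋₁; moreover the coefficients are a = W̄₀, d₁ = (1/8)(W̄₋₁ − W̄₊₁ + 10W₊ − 10W₋), d₂ = (1/4)(30(W₊ + W₋) − 58W̄₀ − W̄₊₁ − W̄₋₁), d₃ = 3(W̄₊₁ − W̄₋₁) − 6(W₊ − W₋), and d₄ = 10(W̄₊₁ + W̄₋₁) + 100W̄₀ − 60(W₊ + W₋). -/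
/-!
The five data are linear functionals of the coefficient vector `(a, d₁, d₂, d₃, d₄)`.
Evaluating them on the basis with an explicit primitive of `p` turns the reconstruction
conditions into a `5 × 5` linear system; the shifts `-1/12` and `-1/80` in `φ₂` and `φ₄` make
every `φₖ` average to zero over the central cell, so the system decouples into `a = W̄₀` plus
two `2 × 2` systems, one for the odd pair `(d₁, d₃)` and one for the even pair `(d₂, d₄)`.
-/

noncomputable section

def hfvsPoly (c : ℝ × ℝ × ℝ × ℝ × ℝ) (s : ℝ) : ℝ :=
  c.1 + c.2.1 * s + c.2.2.1 * ((1/2) * (s^2 - 1/12)) +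
    c.2.2.2.1 * (s^3 / 6) + c.2.2.2.2 * ((1/24) * (s^4 - 1/80))

def hfvsPrimitive (c : ℝ × ℝ × ℝ × ℝ × ℝ) (s : ℝ) : ℝ :=
  c.1 * s + c.2.1 * (s^2 / 2) + c.2.2.1 * ((1/2) * (s^3 / 3 - s / 12)) +
    c.2.2.2.1 * (s^4 / 24) + c.2.2.2.2 * ((1/24) * (s^5 / 5 - s / 80))

def hfvsCoeffs (Wp Wm W0 Wp1 Wm1 : ℝ) : ℝ × ℝ × ℝ × ℝ × ℝ :=
  (W0,
   (1/8) * (Wm1 - Wp1 + 10 * Wp - 10 * Wm),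
   (1/4) * (30 * (Wp + Wm) - 58 * W0 - Wp1 - Wm1),
   3 * (Wp1 - Wm1) - 6 * (Wp - Wm),
   10 * (Wp1 + Wm1) + 100 * W0 - 60 * (Wp + Wm))

end

theorem hasDerivAt_hfvsPrimitive (c : ℝ × ℝ × ℝ × ℝ × ℝ) (s : ℝ) :
    HasDerivAt (hfvsPrimitive c) (hfvsPoly c s) s := by
  have hx : HasDerivAt (fun x : ℝ => x) 1 s := hasDerivAt_id' s
  have h₂ := ((hx.pow 3).div_const 3).sub (hx.div_const 12)
  have h₄ := ((hx.pow 5).div_const 5).sub (hx.div_const 80)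
  exact ((((hx.const_mul c.1).add (((hx.pow 2).div_const 2).const_mul c.2.1)).add
    ((h₂.const_mul (1/2)).const_mul c.2.2.1)).add
    (((hx.pow 4).div_const 24).const_mul c.2.2.2.1)).add
    ((h₄.const_mul (1/24)).const_mul c.2.2.2.2) |>.congr_deriv (by simp only [hfvsPoly]; ring)

theorem integral_hfvsPoly (c : ℝ × ℝ × ℝ × ℝ × ℝ) (a b : ℝ) :
    ∫ s in a..b, hfvsPoly c s = hfvsPrimitive c b - hfvsPrimitive c a :=
  intervalIntegral.integral_eq_sub_of_hasDerivAt (fun s _ => hasDerivAt_hfvsPrimitive c s)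
    ((by unfold hfvsPoly; fun_prop : Continuous (hfvsPoly c)).intervalIntegrable a b)

section CellData

variable (a d₁ d₂ d₃ d₄ : ℝ)

theorem hfvsPoly_half :
    hfvsPoly (a, d₁, d₂, d₃, d₄) (1/2) = a + d₁ / 2 + d₂ / 12 + d₃ / 48 + d₄ / 480 := by
  simp only [hfvsPoly]; ring

theorem hfvsPoly_neg_half :
    hfvsPoly (a, d₁, d₂, d₃, d₄) (-(1:ℝ)/2) = a - d₁ / 2 + d₂ / 12 - d₃ / 48 + d₄ / 480 := by
  simp only [hfvsPoly]; ring

theorem integral_hfvsPoly_central_cell :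
    ∫ s in (-(1:ℝ)/2)..(1/2), hfvsPoly (a, d₁, d₂, d₃, d₄) s = a := by
  rw [integral_hfvsPoly]; simp only [hfvsPrimitive]; ring

theorem integral_hfvsPoly_right_cell :
    ∫ s in ((1:ℝ)/2)..(3/2), hfvsPoly (a, d₁, d₂, d₃, d₄) s =
      a + d₁ + d₂ / 2 + 5 * d₃ / 24 + d₄ / 16 := by
  rw [integral_hfvsPoly]; simp only [hfvsPrimitive]; ring

theorem integral_hfvsPoly_left_cell :
    ∫ s in (-(3:ℝ)/2)..(-(1:ℝ)/2), hfvsPoly (a, d₁, d₂, d₃, d₄) s =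
      a - d₁ + d₂ / 2 - 5 * d₃ / 24 + d₄ / 16 := by
  rw [integral_hfvsPoly]; simp only [hfvsPrimitive]; ring

end CellData

theorem hfvs_linear_system_iff (a d₁ d₂ d₃ d₄ Wp Wm W0 Wp1 Wm1 : ℝ) :
    (a + d₁ / 2 + d₂ / 12 + d₃ / 48 + d₄ / 480 = Wp ∧
      a - d₁ / 2 + d₂ / 12 - d₃ / 48 + d₄ / 480 = Wm ∧
      a = W0 ∧
      a + d₁ + d₂ / 2 + 5 * d₃ / 24 + d₄ / 16 = Wp1 ∧
      a - d₁ + d₂ / 2 - 5 * d₃ / 24 + d₄ / 16 = Wm1) ↔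
      (a, d₁, d₂, d₃, d₄) = hfvsCoeffs Wp Wm W0 Wp1 Wm1 := by
  simp only [hfvsCoeffs, Prod.mk.injEq]
  constructor
  · rintro ⟨hp, hm, h0, hp1, hm1⟩
    refine ⟨h0, ?_, ?_, ?_, ?_⟩ <;> linarith
  · rintro ⟨rfl, rfl, rfl, rfl, rfl⟩
    refine ⟨?_, ?_, rfl, ?_, ?_⟩ <;> ring

theorem hfvs_conditions_iff (Wp Wm W0 Wp1 Wm1 : ℝ) (c : ℝ × ℝ × ℝ × ℝ × ℝ) :
    (hfvsPoly c (1/2) = Wp ∧ hfvsPoly c (-(1:ℝ)/2) = Wm ∧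
      (∫ s in (-(1:ℝ)/2)..(1/2), hfvsPoly c s) = W0 ∧
      (∫ s in ((1:ℝ)/2)..(3/2), hfvsPoly c s) = Wp1 ∧
      (∫ s in (-(3:ℝ)/2)..(-(1:ℝ)/2), hfvsPoly c s) = Wm1) ↔
      c = hfvsCoeffs Wp Wm W0 Wp1 Wm1 := by
  obtain ⟨a, d₁, d₂, d₃, d₄⟩ := c
  rw [hfvsPoly_half, hfvsPoly_neg_half, integral_hfvsPoly_central_cell,
    integral_hfvsPoly_right_cell, integral_hfvsPoly_left_cell]
  exact hfvs_linear_system_iff ..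

/-- Fifth-order HFVS reconstruction: with the basis `φ₁(s)=s`, `φ₂(s)=(1/2)(s²−1/12)`,
`φ₃(s)=s³/6`, `φ₄(s)=(1/24)(s⁴−1/80)`, the two interface values and the three cell averages
determine unique coefficients `a, d₁, d₂, d₃, d₄`, given by the explicit formulas of the paper. -/
theorem hfvs_fifth_order_reconstruction (Wp Wm W0 Wp1 Wm1 : ℝ) :
    let p : (ℝ × ℝ × ℝ × ℝ × ℝ) → ℝ → ℝ := fun c s =>
      c.1 + c.2.1 * s + c.2.2.1 * ((1/2) * (s^2 - 1/12)) +
        c.2.2.2.1 * (s^3 / 6) + c.2.2.2.2 * ((1/24) * (s^4 - 1/80))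
    let Q : (ℝ × ℝ × ℝ × ℝ × ℝ) → Prop := fun c =>
      p c (1/2) = Wp ∧ p c (-(1:ℝ)/2) = Wm ∧
      (∫ s in (-(1:ℝ)/2)..(1/2), p c s) = W0 ∧
      (∫ s in ((1:ℝ)/2)..(3/2), p c s) = Wp1 ∧
      (∫ s in (-(3:ℝ)/2)..(-(1:ℝ)/2), p c s) = Wm1
    (∃! c : ℝ × ℝ × ℝ × ℝ × ℝ, Q c) ∧
    (∀ c : ℝ × ℝ × ℝ × ℝ × ℝ, Q c →
      c = (W0,
           (1/8) * (Wm1 - Wp1 + 10 * Wp - 10 * Wm),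
           (1/4) * (30 * (Wp + Wm) - 58 * W0 - Wp1 - Wm1),
           3 * (Wp1 - Wm1) - 6 * (Wp - Wm),
           10 * (Wp1 + Wm1) + 100 * W0 - 60 * (Wp + Wm))) := by
  intro p Q
  have hQ : ∀ c, Q c ↔ c = hfvsCoeffs Wp Wm W0 Wp1 Wm1 := hfvs_conditions_iff Wp Wm W0 Wp1 Wm1
  exact ⟨(existsUnique_congr hQ).2 existsUnique_eq, fun c hc => (hQ c).1 hc⟩
end

section
/- Let q : ℝ → ℝ be a polynomial of degree at most 4. Set W₊ = q(1/2), W₋ = q(−1/2), W̄₀ = ∫_{−1/2}^{1/2} q, W̄₊₁ = ∫_{1/2}^{3/2} q, W̄₋₁ = ∫_{−3/2}^{−1/2} q. Then the unique polynomial p of degree at most 4 satisfying p(1/2) = W₊, p(−1/2) = W₋, ∫_{−1/2}^{1/2} p = W̄₀, ∫_{1/2}^{3/2} p = W̄₊₁, ∫_{−3/2}^{−1/2} p = W̄₋₁ is p = q. In particular, the fifth-order HFVS reconstruction reproduces quartic polynomials exactly. -/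
/-! A quartic `r` vanishing at `±1/2` with zero averages over the three cells must vanish: in the
coefficients of `r` these are five homogeneous linear equations with nonsingular matrix. Their
odd part gives `r₁/2 + r₃/8 = r₁ + 5 r₃/4 = 0`, their even part a nonsingular `3 × 3` system in
`r₀, r₂, r₄`. Applying this to `r = p - q` gives the theorem. -/

open Polynomial

theorem Polynomial.intervalIntegral_eval_eq_sum_range {f : ℝ[X]} {n : ℕ} (hf : f.natDegree < n)
    (a b : ℝ) :
    ∫ s in a..b, f.eval s =
      ∑ i ∈ Finset.range n, f.coeff i * ((b ^ (i + 1) - a ^ (i + 1)) / (i + 1)) := by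
  simp_rw [eval_eq_sum_range' hf]
  rw [intervalIntegral.integral_finsetSum (f := fun i s => f.coeff i * s ^ i) fun i _ =>
    (continuous_const.mul (continuous_pow i)).intervalIntegrable a b]
  refine Finset.sum_congr rfl fun i _ => ?_
  rw [intervalIntegral.integral_const_mul, integral_pow]

theorem Polynomial.intervalIntegral_eval_sub (p q : ℝ[X]) (a b : ℝ) :
    ∫ s in a..b, (p - q).eval s = (∫ s in a..b, p.eval s) - ∫ s in a..b, q.eval s := by
  simp only [eval_sub]
  exact intervalIntegral.integral_sub (p.continuous.intervalIntegrable a b)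
    (q.continuous.intervalIntegrable a b)

theorem Polynomial.eq_zero_of_natDegree_le_four_of_hfvs_data_eq_zero {r : ℝ[X]}
    (hr : r.natDegree ≤ 4) (hplus : r.eval (1 / 2) = 0) (hminus : r.eval (-1 / 2) = 0)
    (hmid : ∫ s in (-1 / 2 : ℝ)..(1 / 2), r.eval s = 0)
    (hright : ∫ s in (1 / 2 : ℝ)..(3 / 2), r.eval s = 0)
    (hleft : ∫ s in (-3 / 2 : ℝ)..(-1 / 2), r.eval s = 0) : r = 0 := by
  have hr5 : r.natDegree < 5 := Nat.lt_succ_of_le hr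
  rw [eval_eq_sum_range' hr5] at hplus hminus
  rw [intervalIntegral_eval_eq_sum_range hr5] at hmid hright hleft
  simp only [Finset.sum_range_succ, Finset.sum_range_zero] at hplus hminus hmid hright hleft
  norm_num at hplus hminus hmid hright hleft
  have hc3 : r.coeff 3 = 0 := by linarith
  have hc1 : r.coeff 1 = 0 := by linarith
  have hc4 : r.coeff 4 = 0 := by linarith
  have hc2 : r.coeff 2 = 0 := by linarith
  have hc0 : r.coeff 0 = 0 := by linarith
  ext i
  rcases lt_or_ge i 5 with hi | hi
  · interval_cases i <;> assumption
  · exact coeff_eq_zero_of_natDegree_lt (by omega)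

/-- Exactness (polynomial reproduction) of the fifth-order HFVS reconstruction:
a polynomial of degree at most 4 is uniquely determined by its values at `s = ±1/2` and
its averages over the three cells `[−3/2,−1/2]`, `[−1/2,1/2]`, `[1/2,3/2]`; in particular the
reconstruction reproduces quartic polynomials exactly. -/
theorem hfvs_fifth_order_exactness
    (q : Polynomial ℝ) (hq : q.natDegree ≤ 4) :
    ∀ p : Polynomial ℝ, p.natDegree ≤ 4 →
      p.eval (1/2 : ℝ) = q.eval (1/2 : ℝ) →
      p.eval (-(1:ℝ)/2) = q.eval (-(1:ℝ)/2) →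
      (∫ s in (-(1:ℝ)/2)..(1/2), p.eval s) = (∫ s in (-(1:ℝ)/2)..(1/2), q.eval s) →
      (∫ s in ((1:ℝ)/2)..(3/2), p.eval s) = (∫ s in ((1:ℝ)/2)..(3/2), q.eval s) →
      (∫ s in (-(3:ℝ)/2)..(-(1:ℝ)/2), p.eval s) = (∫ s in (-(3:ℝ)/2)..(-(1:ℝ)/2), q.eval s) →
      p = q := by
  intro p hp hplus hminus hmid hright hleft
  rw [← sub_eq_zero]
  refine eq_zero_of_natDegree_le_four_of_hfvs_data_eq_zero
    ((natDegree_sub_le p q).trans (max_le hp hq)) ?_ ?_ ?_ ?_ ?_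
  · rwa [eval_sub, sub_eq_zero]
  · rwa [eval_sub, sub_eq_zero]
  all_goals rwa [intervalIntegral_eval_sub, sub_eq_zero]
end
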